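/- arXiv:1507.02013 — 5 statements merged into one kernel-verified Lean document; each statement's English description precedes it below -/
import Mathlib

section
/- Let X be a metric space and Z a separable Banach space. If a multivalued map G : X → 2^Z is weakly upper semicontinuous, then G is measurable with respect to the Borel σ-algebra of X; that is, for every open set O ⊆ Z, the set G⁻¹(O) = {x ∈ X : G(x) ∩ O ≠ ∅} is a Borel subset of X. -/
/-!
A closed ball is weakly sequentially closed (by Hahn–Banach, `‖v‖` is controlled by the values
`ℓ v`), so weak upper semicontinuity makes `{x | G x ∩ B ≠ ∅}` sequentially closed, hence closed,
for every closed ball `B`. In a separable space an open set is a countable union of closed balls.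
-/

open Filter Topology Metric

def WeaklyUpperSemicontinuous {X Z : Type*} [TopologicalSpace X] [SeminormedAddCommGroup Z]
    [NormedSpace ℝ Z] (G : X → Set Z) : Prop :=
  ∀ x₀ : X, ∀ x : ℕ → X, Tendsto x atTop (𝓝 x₀) →
    ∀ z : ℕ → Z, (∀ n, z n ∈ G (x n)) →
    ∃ z₀ ∈ G x₀, ∃ φ : ℕ → ℕ, StrictMono φ ∧
      ∀ ℓ : Z →L[ℝ] ℝ, Tendsto (fun k => ℓ (z (φ k))) atTop (𝓝 (ℓ z₀))

theorem mem_closedBall_of_forall_tendsto_dual {𝕜 E ι : Type*} [RCLike 𝕜]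
    [SeminormedAddCommGroup E] [NormedSpace 𝕜 E] {l : Filter ι} [l.NeBot] {z : ι → E}
    {z₀ c : E} {r : ℝ} (hz : ∀ᶠ i in l, z i ∈ closedBall c r)
    (hlim : ∀ ℓ : StrongDual 𝕜 E, Tendsto (fun i => ℓ (z i)) l (𝓝 (ℓ z₀))) :
    z₀ ∈ closedBall c r := by
  have hr : 0 ≤ r := let ⟨_, hi⟩ := hz.exists; dist_nonneg.trans hi
  rw [mem_closedBall, dist_eq_norm]
  refine NormedSpace.norm_le_dual_bound 𝕜 _ hr fun ℓ => ?_
  have hlim' : Tendsto (fun i => ‖ℓ (z i - c)‖) l (𝓝 ‖ℓ (z₀ - c)‖) := by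
    simpa only [map_sub] using ((hlim ℓ).sub_const (ℓ c)).norm
  refine le_of_tendsto hlim' (hz.mono fun i hi => ?_)
  rw [mem_closedBall, dist_eq_norm] at hi
  calc ‖ℓ (z i - c)‖ ≤ ‖ℓ‖ * ‖z i - c‖ := ℓ.le_opNorm _
    _ ≤ ‖ℓ‖ * r := by gcongr
    _ = r * ‖ℓ‖ := mul_comm _ _

theorem WeaklyUpperSemicontinuous.isClosed_setOf_inter_closedBall_nonempty {X Z : Type*}
    [TopologicalSpace X] [SequentialSpace X] [SeminormedAddCommGroup Z] [NormedSpace ℝ Z]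
    {G : X → Set Z} (hG : WeaklyUpperSemicontinuous G) (c : Z) (r : ℝ) :
    IsClosed {x | (G x ∩ closedBall c r).Nonempty} := by
  refine IsSeqClosed.isClosed fun x x₀ hx hconv => ?_
  choose z hzG hzB using hx
  obtain ⟨z₀, hz₀, φ, -, hweak⟩ := hG x₀ x hconv z hzG
  exact ⟨z₀, hz₀, mem_closedBall_of_forall_tendsto_dual (.of_forall fun k => hzB (φ k)) hweak⟩

theorem IsOpen.exists_countable_biUnion_closedBall {α : Type*} [PseudoMetricSpace α]
    [TopologicalSpace.SeparableSpace α] {O : Set α} (hO : IsOpen O) :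
    ∃ (T : Set α) (r : α → ℝ), T.Countable ∧ O = ⋃ x ∈ T, closedBall x (r x) := by
  have : ∀ x ∈ O, ∃ ε > 0, closedBall x ε ⊆ O := fun x hx =>
    nhds_basis_closedBall.mem_iff.1 (hO.mem_nhds hx)
  choose! r hr0 hrO using this
  obtain ⟨T, hTO, hTc, hT⟩ :=
    TopologicalSpace.isOpen_biUnion_countable O (fun x => ball x (r x)) fun _ _ => isOpen_ball
  refine ⟨T, r, hTc, subset_antisymm ?_ (Set.iUnion₂_subset fun x hx => hrO x (hTO hx))⟩
  calc O ⊆ ⋃ x ∈ O, ball x (r x) := fun x hx => Set.mem_biUnion hx (mem_ball_self (hr0 x hx))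
    _ = ⋃ x ∈ T, ball x (r x) := hT.symm
    _ ⊆ ⋃ x ∈ T, closedBall x (r x) := Set.iUnion₂_mono fun _ _ => ball_subset_closedBall

theorem stmt1_general {X Z : Type*} [MetricSpace X]
    [NormedAddCommGroup Z] [NormedSpace ℝ Z]
    [TopologicalSpace.SeparableSpace Z]
    [MeasurableSpace X] [BorelSpace X]
    (G : X → Set Z)
    (hwusc : ∀ x₀ : X, ∀ x : ℕ → X, Tendsto x atTop (𝓝 x₀) →
      ∀ z : ℕ → Z, (∀ n, z n ∈ G (x n)) →
      ∃ z₀ ∈ G x₀, ∃ φ : ℕ → ℕ, StrictMono φ ∧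
        ∀ ℓ : Z →L[ℝ] ℝ, Tendsto (fun k => ℓ (z (φ k))) atTop (𝓝 (ℓ z₀))) :
    ∀ O : Set Z, IsOpen O → MeasurableSet {x : X | (G x ∩ O).Nonempty} := by
  have hG : WeaklyUpperSemicontinuous G := hwusc
  intro O hO
  obtain ⟨T, r, hTc, rfl⟩ := hO.exists_countable_biUnion_closedBall
  simp only [Set.inter_iUnion₂, Set.nonempty_iUnion, Set.ofPred_exists]
  exact .biUnion hTc fun c _ => (hG.isClosed_setOf_inter_closedBall_nonempty c (r c)).measurableSet

/-- A weakly upper semicontinuous multivalued map `G` from a metric space `X`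
to a separable Banach space `Z` is Borel measurable: the inverse image
`G⁻¹(O) = {x | G x ∩ O ≠ ∅}` of every open set `O ⊆ Z` is a Borel subset of `X`. -/
theorem stmt1 {X Z : Type*} [MetricSpace X]
    [NormedAddCommGroup Z] [NormedSpace ℝ Z] [CompleteSpace Z]
    [TopologicalSpace.SeparableSpace Z]
    [MeasurableSpace X] [BorelSpace X]
    (G : X → Set Z)
    (hwusc : ∀ x₀ : X, ∀ x : ℕ → X, Tendsto x atTop (𝓝 x₀) →
      ∀ z : ℕ → Z, (∀ n, z n ∈ G (x n)) →
      ∃ z₀ ∈ G x₀, ∃ φ : ℕ → ℕ, StrictMono φ ∧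
        ∀ ℓ : Z →L[ℝ] ℝ, Tendsto (fun k => ℓ (z (φ k))) atTop (𝓝 (ℓ z₀))) :
    ∀ O : Set Z, IsOpen O → MeasurableSet {x : X | (G x ∩ O).Nonempty} :=
  stmt1_general G hwusc
end

section
/- Let (Ω, 𝓕) be a measurable space and X a metric space. For each n ∈ ℕ let E_n : Ω → 2^X be an 𝓕-measurable set-valued map with nonempty closed values. Suppose that for each fixed ω ∈ Ω every sequence (x_n) with x_n ∈ E_n(ω) has a subsequence converging in X, and that the sequence (E_n(ω)) is decreasing: E_{n+1}(ω) ⊆ E_n(ω) for all n and ω. Then the map ω ↦ ⋂_{n∈ℕ} E_n(ω) is 𝓕-measurable with nonempty closed values. -/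
open Filter Topology Set

/-! The limit of a convergent subsequence of points `xₙ ∈ Eₙ(ω)` lies in every closed `Eₘ(ω)`, which
gives the nonempty values. For measurability write an open `O` as `⋃ₖ Uₖ` with open `Uₖ` and
`closure Uₖ ⊆ O` (possible in any perfectly normal space). Then `⋂ₙ Eₙ(ω)` meets `O` iff some `Uₖ`
meets every `Eₙ(ω)`: for the converse, a limit of points `xₙ ∈ Eₙ(ω) ∩ Uₖ` lies in
`⋂ₙ Eₙ(ω) ∩ closure Uₖ`. The right-hand side is a countable union of countable intersections of
measurable sets. -/

theorem IsOpen.exists_iUnion_isOpen_closure_subset {X : Type*} [TopologicalSpace X]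
    [PerfectlyNormalSpace X] {O : Set X} (hO : IsOpen O) :
    ∃ U : ℕ → Set X, (∀ k, IsOpen (U k)) ∧ (∀ k, closure (U k) ⊆ O) ∧ ⋃ k, U k = O := by
  obtain ⟨V, hVopen, hOV⟩ := isGδ_iff_eq_iInter_nat.1 hO.isClosed_compl.isGδ
  have hVO : ∀ k, (V k)ᶜ ⊆ O := fun k =>
    compl_subset_comm.1 (hOV ▸ iInter_subset V k)
  choose U hUopen hVU hUO using fun k =>
    normal_exists_closure_subset (hVopen k).isClosed_compl hO (hVO k)
  refine ⟨U, hUopen, hUO, (iUnion_subset fun k => subset_closure.trans (hUO k)).antisymm ?_⟩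
  intro x hx
  have : x ∉ ⋂ k, V k := hOV ▸ not_not_intro hx
  obtain ⟨k, hk⟩ := by simpa only [mem_iInter, not_forall] using this
  exact mem_iUnion.2 ⟨k, hVU k hk⟩

section DecreasingClosed

variable {X : Type*} [TopologicalSpace X] {E : ℕ → Set X}

theorem mem_iInter_of_tendsto_subseq (hanti : Antitone E) (hcl : ∀ n, IsClosed (E n))
    {x : ℕ → X} (hx : ∀ n, x n ∈ E n) {φ : ℕ → ℕ} (hφ : StrictMono φ) {a : X}
    (ha : Tendsto (fun k => x (φ k)) atTop (𝓝 a)) : a ∈ ⋂ n, E n :=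
  mem_iInter.2 fun m => (hcl m).mem_of_tendsto ha <|
    (eventually_ge_atTop m).mono fun k hk => hanti (hk.trans hφ.le_apply) (hx (φ k))

theorem iInter_inter_nonempty_iff_exists_forall (hanti : Antitone E) (hcl : ∀ n, IsClosed (E n))
    (hcpt : ∀ x : ℕ → X, (∀ n, x n ∈ E n) →
      ∃ a : X, ∃ φ : ℕ → ℕ, StrictMono φ ∧ Tendsto (fun k => x (φ k)) atTop (𝓝 a))
    {O : Set X} {U : ℕ → Set X} (hUO : ∀ k, closure (U k) ⊆ O) (hU : ⋃ k, U k = O) :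
    ((⋂ n, E n) ∩ O).Nonempty ↔ ∃ k, ∀ n, (E n ∩ U k).Nonempty := by
  constructor
  · rintro ⟨a, haE, haO⟩
    obtain ⟨k, hk⟩ := mem_iUnion.1 (hU ▸ haO)
    exact ⟨k, fun n => ⟨a, mem_iInter.1 haE n, hk⟩⟩
  · rintro ⟨k, hk⟩
    choose x hxE hxU using hk
    obtain ⟨a, φ, hφ, ha⟩ := hcpt x hxE
    have ha_closure : a ∈ closure (U k) :=
      mem_closure_of_tendsto ha (Eventually.of_forall fun j => hxU (φ j))
    exact ⟨a, mem_iInter_of_tendsto_subseq hanti hcl hxE hφ ha, hUO k ha_closure⟩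

theorem iInter_nonempty_of_forall_exists_tendsto_subseq (hanti : Antitone E)
    (hcl : ∀ n, IsClosed (E n)) (hne : ∀ n, (E n).Nonempty)
    (hcpt : ∀ x : ℕ → X, (∀ n, x n ∈ E n) →
      ∃ a : X, ∃ φ : ℕ → ℕ, StrictMono φ ∧ Tendsto (fun k => x (φ k)) atTop (𝓝 a)) :
    (⋂ n, E n).Nonempty := by
  choose x hx using hne
  obtain ⟨a, φ, hφ, ha⟩ := hcpt x hx
  exact ⟨a, mem_iInter_of_tendsto_subseq hanti hcl hx hφ ha⟩

end DecreasingClosed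

/-- Let `Eₙ : Ω → 2^X` be `𝓕`-measurable set-valued maps with nonempty
closed values, such that for each fixed `ω` every sequence `xₙ ∈ Eₙ(ω)` has a convergent
subsequence, and such that `(Eₙ(ω))ₙ` is decreasing.  Then `ω ↦ ⋂ₙ Eₙ(ω)` is
`𝓕`-measurable with nonempty closed values. -/
theorem stmt6 {Ω X : Type*} [MeasurableSpace Ω] [MetricSpace X]
    (E : ℕ → Ω → Set X)
    (hmeas : ∀ n, ∀ O : Set X, IsOpen O → MeasurableSet {ω | (E n ω ∩ O).Nonempty})
    (hne : ∀ n ω, (E n ω).Nonempty)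
    (hcl : ∀ n ω, IsClosed (E n ω))
    (hcpt : ∀ ω, ∀ x : ℕ → X, (∀ n, x n ∈ E n ω) →
      ∃ a : X, ∃ φ : ℕ → ℕ, StrictMono φ ∧ Tendsto (fun k => x (φ k)) atTop (𝓝 a))
    (hdec : ∀ n ω, E (n + 1) ω ⊆ E n ω) :
    (∀ O : Set X, IsOpen O → MeasurableSet {ω | ((⋂ n, E n ω) ∩ O).Nonempty}) ∧
    (∀ ω, (⋂ n, E n ω).Nonempty ∧ IsClosed (⋂ n, E n ω)) := by
  have hanti : ∀ ω, Antitone fun n => E n ω := fun ω => antitone_nat_of_succ_le fun n => hdec n ω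
  refine ⟨fun O hO => ?_, fun ω => ⟨?_, isClosed_iInter fun n => hcl n ω⟩⟩
  · obtain ⟨U, hUopen, hUO, hU⟩ := hO.exists_iUnion_isOpen_closure_subset
    have hset : {ω | ((⋂ n, E n ω) ∩ O).Nonempty} = ⋃ k, ⋂ n, {ω | (E n ω ∩ U k).Nonempty} := by
      ext ω
      simpa only [mem_ofPred_eq, mem_iUnion, mem_iInter] using
        iInter_inter_nonempty_iff_exists_forall (hanti ω) (hcl · ω) (hcpt ω) hUO hU
    rw [hset]
    exact .iUnion fun k => .iInter fun n => hmeas n (U k) (hUopen k)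
  · exact iInter_nonempty_of_forall_exists_tendsto_subseq (hanti ω) (hcl · ω) (hne · ω) (hcpt ω)
end

section
/- Let X be a metric space, Ω a set, and θ : ℝ → (Ω → Ω) a group of transformations (θ_0 = id and θ_{t+s} = θ_t ∘ θ_s). Let Φ : [0,∞) × ℝ × Ω × X → 2^X be a multivalued non-autonomous cocycle on X over θ, and let 𝒟 be an inclusion-closed collection of families of nonempty subsets of X. Assume that Φ is 𝒟-pullback asymptotically compact, that Φ(t, τ, ω, ·) : X → 2^X is upper semicontinuous for each t ≥ 0, τ ∈ ℝ, ω ∈ Ω, and that K ∈ 𝒟 is a closed 𝒟-pullback absorbing set for Φ. Then the Ω-limit set Ω(K) satisfies: (i) Ω(K) ∈ 𝒟 and Ω(K)(τ, ω) is compact for every τ ∈ ℝ and ω ∈ Ω; (ii) Ω(K) is invariant: Φ(t, τ, ω, Ω(K)(τ, ω)) = Ω(K)(τ + t, θ_t ω) for all t ≥ 0; (iii) Ω(K) attracts every member of 𝒟: for every D ∈ 𝒟, τ ∈ ℝ and ω ∈ Ω, lim_{t→∞} d(Φ(t, τ − t, θ_{−t}ω, D(τ − t, θ_{−t}ω)),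 Ω(K)(τ, ω)) = 0, where d denotes the Hausdorff semidistance. If moreover Φ and K are both T-periodic for some T > 0, then Ω(K)(τ + T, ω) = Ω(K)(τ, ω) for all τ ∈ ℝ and ω ∈ Ω. -/
/-!
A point of `Ω(B)(τ, ω)` is exactly a limit of points of pullback images
`Φ(tₙ, τ - tₙ, θ_{-tₙ} ω, B(τ - tₙ, θ_{-tₙ} ω))` with `tₙ → ∞`. Pullback asymptotic compactness
therefore makes `Ω(K)` nonempty, compact and attracting: a pullback orbit of `D ∈ 𝒟` staying `ε`
away from `Ω(K)` would have a limit point, which lies in `Ω(D) ⊆ Ω(K)` because `K` absorbs `D`.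

Negative invariance `Ω(K)(τ + t, θ_t ω) ⊆ Φ(t, τ, ω, Ω(K)(τ, ω))` comes from splitting such pullback
images at time `t` with the cocycle property, extracting a convergent subsequence of the
intermediate points and passing to the limit through the closed graph of the upper semicontinuous
map `Φ(t, τ, ω, ·)`. Used at `(τ - r, θ_{-r} ω)` together with `Ω(K) ⊆ K`, it places `Ω(K)(τ, ω)`
inside every pullback image of `K`, which gives positive invariance.
-/

open Filter Topology Set ENNReal

/-- The image of a set under a multivalued map: `Φ(t, τ, ω, S) = ⋃_{x ∈ S} Φ(t, τ, ω, x)`. -/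
def imageSet7 {Ω X : Type*} (Φ : ℝ → ℝ → Ω → X → Set X)
    (t τ : ℝ) (ω : Ω) (S : Set X) : Set X :=
  ⋃ x ∈ S, Φ t τ ω x

/-- The `Ω`-limit set of a family `B`:
`Ω(B)(τ, ω) = ⋂_{r ≥ 0} cl (⋃_{t ≥ r} Φ(t, τ − t, θ_{−t} ω, B(τ − t, θ_{−t} ω)))`. -/
def omegaLimit7 {Ω X : Type*} [MetricSpace X] (Φ : ℝ → ℝ → Ω → X → Set X)
    (θ : ℝ → Ω → Ω) (B : ℝ → Ω → Set X) (τ : ℝ) (ω : Ω) : Set X :=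
  ⋂ (r : ℝ) (_ : 0 ≤ r),
    closure (⋃ (t : ℝ) (_ : r ≤ t),
      imageSet7 Φ t (τ - t) (θ (-t) ω) (B (τ - t) (θ (-t) ω)))

/-- The Hausdorff semidistance `d(A, B) = sup_{a ∈ A} inf_{b ∈ B} d(a, b)` (valued in
`ℝ≥0∞`). -/
noncomputable def hausSemidist7 {X : Type*} [MetricSpace X] (A B : Set X) : ℝ≥0∞ :=
  ⨆ a ∈ A, EMetric.infEdist a B

section Pullback

variable {Ω X : Type*}

theorem flow_apply_flow {θ : ℝ → Ω → Ω} (hθadd : ∀ t s : ℝ, θ (t + s) = θ t ∘ θ s)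
    (a b : ℝ) (ω : Ω) : θ a (θ b ω) = θ (a + b) ω :=
  (congrFun (hθadd a b) ω).symm

theorem flow_apply_flow_neg {θ : ℝ → Ω → Ω} (hθ0 : θ 0 = id)
    (hθadd : ∀ t s : ℝ, θ (t + s) = θ t ∘ θ s) (a : ℝ) (ω : Ω) : θ a (θ (-a) ω) = ω := by
  rw [flow_apply_flow hθadd, add_neg_cancel, hθ0, id]

def HasCocycleProperty (θ : ℝ → Ω → Ω) (Φ : ℝ → ℝ → Ω → X → Set X) : Prop :=
  ∀ t s : ℝ, 0 ≤ t → 0 ≤ s → ∀ (τ : ℝ) (ω : Ω) (x : X),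
    Φ (t + s) τ ω x = ⋃ y ∈ Φ s τ ω x, Φ t (τ + s) (θ s ω) y

def pullbackImage (Φ : ℝ → ℝ → Ω → X → Set X) (θ : ℝ → Ω → Ω) (D : ℝ → Ω → Set X)
    (t τ : ℝ) (ω : Ω) : Set X :=
  imageSet7 Φ t (τ - t) (θ (-t) ω) (D (τ - t) (θ (-t) ω))

def PullbackAbsorbs (Φ : ℝ → ℝ → Ω → X → Set X) (θ : ℝ → Ω → Ω) (K D : ℝ → Ω → Set X) :
    Prop :=
  ∀ (τ : ℝ) (ω : Ω), ∀ᶠ t in atTop, pullbackImage Φ θ D t τ ω ⊆ K τ ω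

def PullbackAsymptoticallyCompact [TopologicalSpace X] (Φ : ℝ → ℝ → Ω → X → Set X)
    (θ : ℝ → Ω → Ω) (D : ℝ → Ω → Set X) (τ : ℝ) (ω : Ω) : Prop :=
  ∀ (t : ℕ → ℝ) (x : ℕ → X), Tendsto t atTop atTop →
    (∀ n, x n ∈ pullbackImage Φ θ D (t n) τ ω) →
    ∃ a : X, ∃ φ : ℕ → ℕ, StrictMono φ ∧ Tendsto (fun k => x (φ k)) atTop (𝓝 a)

variable {θ : ℝ → Ω → Ω} {Φ : ℝ → ℝ → Ω → X → Set X}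

theorem imageSet7_mono {t τ : ℝ} {ω : Ω} {S S' : Set X} (h : S ⊆ S') :
    imageSet7 Φ t τ ω S ⊆ imageSet7 Φ t τ ω S' :=
  biUnion_subset_biUnion_left h

theorem imageSet7_imageSet7 (hΦcoc : HasCocycleProperty θ Φ) {t s τ : ℝ} {ω : Ω}
    (ht : 0 ≤ t) (hs : 0 ≤ s) (S : Set X) :
    imageSet7 Φ t (τ + s) (θ s ω) (imageSet7 Φ s τ ω S) = imageSet7 Φ (t + s) τ ω S := by
  simp only [imageSet7, hΦcoc t s ht hs, biUnion_iUnion]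

theorem imageSet7_pullbackImage (hθ0 : θ 0 = id)
    (hθadd : ∀ t s : ℝ, θ (t + s) = θ t ∘ θ s) (hΦcoc : HasCocycleProperty θ Φ)
    {t s τ : ℝ} {ω : Ω} (ht : 0 ≤ t) (hs : 0 ≤ s) (B : ℝ → Ω → Set X) :
    imageSet7 Φ t τ ω (pullbackImage Φ θ B s τ ω) =
      pullbackImage Φ θ B (s + t) (τ + t) (θ t ω) := by
  have hτ : τ + t - (s + t) = τ - s := by ring
  have hω : θ (-(s + t)) (θ t ω) = θ (-s) ω := by
    rw [flow_apply_flow hθadd]; congr 1; ring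
  calc imageSet7 Φ t τ ω (pullbackImage Φ θ B s τ ω)
      = imageSet7 Φ t (τ - s + s) (θ s (θ (-s) ω))
          (imageSet7 Φ s (τ - s) (θ (-s) ω) (B (τ - s) (θ (-s) ω))) := by
        rw [sub_add_cancel, flow_apply_flow_neg hθ0 hθadd]; rfl
    _ = imageSet7 Φ (t + s) (τ - s) (θ (-s) ω) (B (τ - s) (θ (-s) ω)) :=
        imageSet7_imageSet7 hΦcoc ht hs _
    _ = pullbackImage Φ θ B (s + t) (τ + t) (θ t ω) := by
        rw [pullbackImage, hτ, hω, add_comm]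

theorem pullbackImage_eventually_subset (hθ0 : θ 0 = id)
    (hθadd : ∀ t s : ℝ, θ (t + s) = θ t ∘ θ s) (hΦcoc : HasCocycleProperty θ Φ)
    {K D : ℝ → Ω → Set X} (habs : PullbackAbsorbs Φ θ K D) {r τ : ℝ} {ω : Ω} (hr : 0 ≤ r) :
    ∀ᶠ t in atTop, pullbackImage Φ θ D t τ ω ⊆ pullbackImage Φ θ K r τ ω := by
  have hshift : Tendsto (fun t : ℝ => t - r) atTop atTop := by
    simpa only [sub_eq_add_neg, id] using tendsto_atTop_add_const_right atTop (-r) tendsto_id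
  filter_upwards [hshift.eventually (habs (τ - r) (θ (-r) ω)), eventually_ge_atTop r]
    with t hK ht
  have hsplit := imageSet7_pullbackImage hθ0 hθadd hΦcoc hr (sub_nonneg.2 ht) D
    (τ := τ - r) (ω := θ (-r) ω)
  rw [sub_add_cancel, sub_add_cancel, flow_apply_flow_neg hθ0 hθadd] at hsplit
  exact hsplit ▸ imageSet7_mono hK

end Pullback

section OmegaLimit

variable {Ω X : Type*} [MetricSpace X] {θ : ℝ → Ω → Ω} {Φ : ℝ → ℝ → Ω → X → Set X}
  {B : ℝ → Ω → Set X} {τ : ℝ} {ω : Ω}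

theorem mem_omegaLimit7_iff {a : X} :
    a ∈ omegaLimit7 Φ θ B τ ω ↔
      ∀ r : ℝ, 0 ≤ r → a ∈ closure (⋃ (t : ℝ) (_ : r ≤ t), pullbackImage Φ θ B t τ ω) := by
  simp only [omegaLimit7, pullbackImage, mem_iInter]

theorem mem_omegaLimit7_of_tendsto {ι : Type*} {l : Filter ι} [l.NeBot] {s : ι → ℝ}
    {y : ι → X} {a : X} (hs : Tendsto s l atTop)
    (hy : ∀ i, y i ∈ pullbackImage Φ θ B (s i) τ ω) (ha : Tendsto y l (𝓝 a)) :
    a ∈ omegaLimit7 Φ θ B τ ω := by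
  refine mem_omegaLimit7_iff.2 fun r _ => mem_closure_of_tendsto ha ?_
  filter_upwards [hs.eventually_ge_atTop r] with i hi
  exact mem_biUnion hi (hy i)

theorem exists_seq_of_mem_omegaLimit7 {a : ℕ → X} (ha : ∀ n, a n ∈ omegaLimit7 Φ θ B τ ω)
    {c : ℝ} (hc : 0 ≤ c) :
    ∃ (s : ℕ → ℝ) (y : ℕ → X), (∀ n, c ≤ s n) ∧ Tendsto s atTop atTop ∧
      (∀ n, y n ∈ pullbackImage Φ θ B (s n) τ ω) ∧
      Tendsto (fun n => dist (y n) (a n)) atTop (𝓝 0) := by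
  have hclose : ∀ n : ℕ, ∃ s, c + n ≤ s ∧ ∃ y ∈ pullbackImage Φ θ B s τ ω,
      dist y (a n) < 1 / ((n : ℝ) + 1) := by
    intro n
    obtain ⟨y, hy, hya⟩ := Metric.mem_closure_iff.1
      (mem_omegaLimit7_iff.1 (ha n) (c + n) (by positivity)) _ Nat.one_div_pos_of_nat
    obtain ⟨s, hs, hys⟩ := mem_iUnion₂.1 hy
    exact ⟨s, hs, y, hys, by rwa [dist_comm]⟩
  choose s hs y hy hya using hclose
  refine ⟨s, y, fun n => (le_add_of_nonneg_right n.cast_nonneg).trans (hs n), ?_, hy, ?_⟩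
  · exact tendsto_atTop_mono (fun n => by linarith [hs n]) tendsto_natCast_atTop_atTop
  · exact squeeze_zero (fun _ => dist_nonneg) (fun n => (hya n).le)
      tendsto_one_div_add_atTop_nhds_zero_nat

theorem isCompact_omegaLimit7 (hac : PullbackAsymptoticallyCompact Φ θ B τ ω) :
    IsCompact (omegaLimit7 Φ θ B τ ω) := by
  refine IsSeqCompact.isCompact fun a ha => ?_
  obtain ⟨s, y, -, hs, hy, hya⟩ := exists_seq_of_mem_omegaLimit7 ha le_rfl
  obtain ⟨b, φ, hφ, hyb⟩ := hac s y hs hy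
  exact ⟨b, mem_omegaLimit7_of_tendsto (hs.comp hφ.tendsto_atTop) (fun k => hy (φ k)) hyb,
    φ, hφ, hyb.congr_dist (hya.comp hφ.tendsto_atTop)⟩

theorem omegaLimit7_nonempty
    (hΦne : ∀ t : ℝ, 0 ≤ t → ∀ (τ : ℝ) (ω : Ω) (x : X), (Φ t τ ω x).Nonempty)
    (hB : ∀ (τ : ℝ) (ω : Ω), (B τ ω).Nonempty) (hac : PullbackAsymptoticallyCompact Φ θ B τ ω) :
    (omegaLimit7 Φ θ B τ ω).Nonempty := by
  have hx : ∀ n : ℕ, (pullbackImage Φ θ B n τ ω).Nonempty := fun n =>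
    let ⟨b, hb⟩ := hB (τ - n) (θ (-n) ω)
    let ⟨x, hx⟩ := hΦne n n.cast_nonneg (τ - n) (θ (-n) ω) b
    ⟨x, mem_biUnion hb hx⟩
  choose x hx using hx
  obtain ⟨a, φ, hφ, hxa⟩ := hac _ x tendsto_natCast_atTop_atTop hx
  exact ⟨a, mem_omegaLimit7_of_tendsto
    (tendsto_natCast_atTop_atTop.comp hφ.tendsto_atTop) (fun k => hx (φ k)) hxa⟩

theorem omegaLimit7_subset_closure_of_eventually_subset {S : Set X}
    (h : ∀ᶠ t in atTop, pullbackImage Φ θ B t τ ω ⊆ S) :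
    omegaLimit7 Φ θ B τ ω ⊆ closure S := by
  obtain ⟨T, hT⟩ := eventually_atTop.1 h
  intro a ha
  refine closure_mono ?_ (mem_omegaLimit7_iff.1 ha (max T 0) (le_max_right _ _))
  exact iUnion₂_subset fun t ht => hT t ((le_max_left _ _).trans ht)

theorem omegaLimit7_subset_omegaLimit7_of_absorbs (hθ0 : θ 0 = id)
    (hθadd : ∀ t s : ℝ, θ (t + s) = θ t ∘ θ s) (hΦcoc : HasCocycleProperty θ Φ)
    {K D : ℝ → Ω → Set X} (habs : PullbackAbsorbs Φ θ K D) :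
    omegaLimit7 Φ θ D τ ω ⊆ omegaLimit7 Φ θ K τ ω := fun _ ha =>
  mem_omegaLimit7_iff.2 fun r hr =>
    closure_mono (subset_iUnion₂_of_subset r le_rfl subset_rfl)
      (omegaLimit7_subset_closure_of_eventually_subset
        (pullbackImage_eventually_subset hθ0 hθadd hΦcoc habs hr) ha)

theorem tendsto_hausSemidist7_of_omegaLimit7_subset {A : Set X}
    (hac : PullbackAsymptoticallyCompact Φ θ B τ ω) (hA : omegaLimit7 Φ θ B τ ω ⊆ A) :
    Tendsto (fun t => hausSemidist7 (pullbackImage Φ θ B t τ ω) A) atTop (𝓝 0) := by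
  refine ENNReal.tendsto_nhds_zero.2 fun ε hε => ?_
  by_contra h
  have hfar : ∀ n : ℕ, ∃ t : ℝ, (n : ℝ) ≤ t ∧ ∃ x ∈ pullbackImage Φ θ B t τ ω,
      ε < Metric.infEDist x A := fun n => by
    obtain ⟨t, ht, hεt⟩ := frequently_atTop.1 (not_eventually.1 h) n
    exact ⟨t, ht, lt_biSup_iff.1 (not_le.1 hεt)⟩
  choose t ht x hx hxA using hfar
  have htop : Tendsto t atTop atTop := tendsto_atTop_mono ht tendsto_natCast_atTop_atTop
  obtain ⟨a, φ, hφ, hxa⟩ := hac t x htop hx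
  have haA : a ∈ A :=
    hA (mem_omegaLimit7_of_tendsto (htop.comp hφ.tendsto_atTop) (fun k => hx (φ k)) hxa)
  have hdist : Tendsto (fun k => Metric.infEDist (x (φ k)) A) atTop (𝓝 0) := by
    simpa only [Metric.infEDist_zero_of_mem haA, Function.comp_def] using
      ((Metric.continuous_infEDist (s := A)).tendsto a).comp hxa
  obtain ⟨k, hk⟩ := (hdist.eventually (gt_mem_nhds hε)).exists
  exact (hxA (φ k)).not_gt hk

theorem omegaLimit7_subset_imageSet7 (hθ0 : θ 0 = id)
    (hθadd : ∀ t s : ℝ, θ (t + s) = θ t ∘ θ s) (hΦcoc : HasCocycleProperty θ Φ)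
    {t : ℝ} (ht : 0 ≤ t) (hcl : ∀ x, IsClosed (Φ t τ ω x))
    (husc : UpperHemicontinuous (Φ t τ ω)) (hac : PullbackAsymptoticallyCompact Φ θ B τ ω) :
    omegaLimit7 Φ θ B (τ + t) (θ t ω) ⊆ imageSet7 Φ t τ ω (omegaLimit7 Φ θ B τ ω) := by
  intro z hz
  obtain ⟨s, y, hst, hs, hy, hyz⟩ := exists_seq_of_mem_omegaLimit7 (fun _ => hz) ht
  have hsplit : ∀ n, y n ∈ imageSet7 Φ t τ ω (pullbackImage Φ θ B (s n - t) τ ω) := fun n => by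
    rw [imageSet7_pullbackImage hθ0 hθadd hΦcoc ht (sub_nonneg.2 (hst n)), sub_add_cancel]
    exact hy n
  choose x hx hyx using fun n => mem_iUnion₂.1 (hsplit n)
  have hst' : Tendsto (fun n => s n - t) atTop atTop := by
    simpa only [sub_eq_add_neg] using tendsto_atTop_add_const_right atTop (-t) hs
  obtain ⟨b, φ, hφ, hxb⟩ := hac _ x hst' hx
  have hyφ : Tendsto (fun k => y (φ k)) atTop (𝓝 z) :=
    (tendsto_iff_dist_tendsto_zero.2 hyz).comp hφ.tendsto_atTop
  exact mem_biUnion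
    (mem_omegaLimit7_of_tendsto (hst'.comp hφ.tendsto_atTop) (fun k => hx (φ k)) hxb)
    (UpperHemicontinuousAt.mem_of_tendsto (husc b) (hcl b) hxb
      (Frequently.of_forall fun k => hyx (φ k)) hyφ)

theorem omegaLimit7_subset_pullbackImage (hθ0 : θ 0 = id)
    (hθadd : ∀ t s : ℝ, θ (t + s) = θ t ∘ θ s) {K : ℝ → Ω → Set X} {r : ℝ}
    (hneg : ∀ (τ : ℝ) (ω : Ω),
      omegaLimit7 Φ θ B (τ + r) (θ r ω) ⊆ imageSet7 Φ r τ ω (omegaLimit7 Φ θ B τ ω))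
    (hsub : ∀ (τ : ℝ) (ω : Ω), omegaLimit7 Φ θ B τ ω ⊆ K τ ω) :
    omegaLimit7 Φ θ B τ ω ⊆ pullbackImage Φ θ K r τ ω := by
  have h := hneg (τ - r) (θ (-r) ω)
  rw [sub_add_cancel, flow_apply_flow_neg hθ0 hθadd] at h
  exact h.trans (imageSet7_mono (hsub _ _))

theorem imageSet7_subset_omegaLimit7 (hθ0 : θ 0 = id)
    (hθadd : ∀ t s : ℝ, θ (t + s) = θ t ∘ θ s) (hΦcoc : HasCocycleProperty θ Φ)
    {K : ℝ → Ω → Set X} {A : Set X} {t : ℝ} (ht : 0 ≤ t)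
    (hA : ∀ r : ℝ, 0 ≤ r → A ⊆ pullbackImage Φ θ K r τ ω) :
    imageSet7 Φ t τ ω A ⊆ omegaLimit7 Φ θ K (τ + t) (θ t ω) := by
  intro y hy
  refine mem_omegaLimit7_iff.2 fun r hr => subset_closure ?_
  have hy' : y ∈ pullbackImage Φ θ K (r + t) (τ + t) (θ t ω) := by
    rw [← imageSet7_pullbackImage hθ0 hθadd hΦcoc ht hr]
    exact imageSet7_mono (hA r hr) hy
  exact mem_biUnion (le_add_of_nonneg_right ht) hy'

theorem omegaLimit7_add_period {K : ℝ → Ω → Set X} {T : ℝ}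
    (hΦT : ∀ (t τ : ℝ) (ω : Ω), Φ t (τ + T) ω = Φ t τ ω)
    (hKT : ∀ (τ : ℝ) (ω : Ω), K (τ + T) ω = K τ ω) :
    omegaLimit7 Φ θ K (τ + T) ω = omegaLimit7 Φ θ K τ ω := by
  have hshift : ∀ t : ℝ, τ + T - t = τ - t + T := fun t => by ring
  simp only [omegaLimit7, imageSet7, hshift, hΦT, hKT]

end OmegaLimit

theorem stmt7_general {Ω X : Type*} [MetricSpace X]
    (θ : ℝ → Ω → Ω) (hθ0 : θ 0 = id)
    (hθadd : ∀ t s : ℝ, θ (t + s) = θ t ∘ θ s)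
    (Φ : ℝ → ℝ → Ω → X → Set X)
    -- `Φ` is a multivalued non-autonomous cocycle with nonempty closed values:
    (hΦne : ∀ t : ℝ, 0 ≤ t → ∀ (τ : ℝ) (ω : Ω) (x : X), (Φ t τ ω x).Nonempty)
    (hΦcl : ∀ t : ℝ, 0 ≤ t → ∀ (τ : ℝ) (ω : Ω) (x : X), IsClosed (Φ t τ ω x))
    (hΦcoc : ∀ t s : ℝ, 0 ≤ t → 0 ≤ s → ∀ (τ : ℝ) (ω : Ω) (x : X),
      Φ (t + s) τ ω x = ⋃ y ∈ Φ s τ ω x, Φ t (τ + s) (θ s ω) y)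
    -- `𝒟` is an inclusion-closed collection of families of nonempty subsets of `X`:
    (𝒟 : Set (ℝ → Ω → Set X))
    (h𝒟ne : ∀ D ∈ 𝒟, ∀ (τ : ℝ) (ω : Ω), (D τ ω).Nonempty)
    (h𝒟inc : ∀ D ∈ 𝒟, ∀ D' : ℝ → Ω → Set X,
      (∀ (τ : ℝ) (ω : Ω), D' τ ω ⊆ D τ ω) → (∀ (τ : ℝ) (ω : Ω), (D' τ ω).Nonempty) →
      D' ∈ 𝒟)
    -- `Φ` is `𝒟`-pullback asymptotically compact:
    (hac : ∀ (τ : ℝ) (ω : Ω), ∀ D ∈ 𝒟, ∀ (t : ℕ → ℝ) (x : ℕ → X),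
      Tendsto t atTop atTop →
      (∀ n, x n ∈ imageSet7 Φ (t n) (τ - t n) (θ (-(t n)) ω)
        (D (τ - t n) (θ (-(t n)) ω))) →
      ∃ a : X, ∃ φ : ℕ → ℕ, StrictMono φ ∧ Tendsto (fun k => x (φ k)) atTop (𝓝 a))
    -- `Φ(t, τ, ω, ·)` is upper semicontinuous:
    (husc : ∀ t : ℝ, 0 ≤ t → ∀ (τ : ℝ) (ω : Ω) (x : X), ∀ U : Set X, IsOpen U →
      Φ t τ ω x ⊆ U → ∃ δ > 0, ∀ x' : X, dist x' x < δ → Φ t τ ω x' ⊆ U)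
    -- `K ∈ 𝒟` is a closed `𝒟`-pullback absorbing set of `Φ`:
    (K : ℝ → Ω → Set X) (hK𝒟 : K ∈ 𝒟)
    (hKcl : ∀ (τ : ℝ) (ω : Ω), IsClosed (K τ ω))
    (hKabs : ∀ (τ : ℝ) (ω : Ω), ∀ D ∈ 𝒟, ∃ T > 0, ∀ t : ℝ, T ≤ t →
      imageSet7 Φ t (τ - t) (θ (-t) ω) (D (τ - t) (θ (-t) ω)) ⊆ K τ ω) :
    -- (i) `Ω(K) ∈ 𝒟` and `Ω(K)(τ, ω)` is compact
    (omegaLimit7 Φ θ K ∈ 𝒟 ∧ ∀ (τ : ℝ) (ω : Ω), IsCompact (omegaLimit7 Φ θ K τ ω)) ∧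
    -- (ii) `Ω(K)` is invariant
    (∀ t : ℝ, 0 ≤ t → ∀ (τ : ℝ) (ω : Ω),
      imageSet7 Φ t τ ω (omegaLimit7 Φ θ K τ ω) = omegaLimit7 Φ θ K (τ + t) (θ t ω)) ∧
    -- (iii) `Ω(K)` attracts every member of `𝒟`
    (∀ (τ : ℝ) (ω : Ω), ∀ D ∈ 𝒟,
      Tendsto (fun t : ℝ => hausSemidist7
          (imageSet7 Φ t (τ - t) (θ (-t) ω) (D (τ - t) (θ (-t) ω)))
          (omegaLimit7 Φ θ K τ ω)) atTop (𝓝 0)) ∧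
    -- periodicity
    (∀ T : ℝ, 0 < T →
      (∀ (t τ : ℝ) (ω : Ω), Φ t (τ + T) ω = Φ t τ ω) →
      (∀ (τ : ℝ) (ω : Ω), K (τ + T) ω = K τ ω) →
      ∀ (τ : ℝ) (ω : Ω), omegaLimit7 Φ θ K (τ + T) ω = omegaLimit7 Φ θ K τ ω) := by
  have habs : ∀ D ∈ 𝒟, PullbackAbsorbs Φ θ K D := fun D hD τ ω =>
    let ⟨T, _, hT⟩ := hKabs τ ω D hD
    eventually_atTop.2 ⟨T, hT⟩
  have hsub : ∀ (τ : ℝ) (ω : Ω), omegaLimit7 Φ θ K τ ω ⊆ K τ ω := fun τ ω =>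
    (hKcl τ ω).closure_eq ▸ omegaLimit7_subset_closure_of_eventually_subset (habs K hK𝒟 τ ω)
  have hne : ∀ (τ : ℝ) (ω : Ω), (omegaLimit7 Φ θ K τ ω).Nonempty := fun τ ω =>
    omegaLimit7_nonempty hΦne (h𝒟ne K hK𝒟) (hac τ ω K hK𝒟)
  have hneg : ∀ t : ℝ, 0 ≤ t → ∀ (τ : ℝ) (ω : Ω),
      omegaLimit7 Φ θ K (τ + t) (θ t ω) ⊆ imageSet7 Φ t τ ω (omegaLimit7 Φ θ K τ ω) :=
    fun t ht τ ω => omegaLimit7_subset_imageSet7 hθ0 hθadd hΦcoc ht (hΦcl t ht τ ω)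
      (.of_forall_isOpen fun x U hU hxU =>
        Metric.eventually_nhds_iff.2 (husc t ht τ ω x U hU hxU))
      (hac τ ω K hK𝒟)
  refine ⟨⟨h𝒟inc K hK𝒟 _ hsub hne, fun τ ω => isCompact_omegaLimit7 (hac τ ω K hK𝒟)⟩,
    fun t ht τ ω => ?_, fun τ ω D hD => ?_,
    fun T _ hΦT hKT τ ω => omegaLimit7_add_period hΦT hKT⟩
  · refine subset_antisymm (imageSet7_subset_omegaLimit7 hθ0 hθadd hΦcoc ht fun r hr => ?_)
      (hneg t ht τ ω)
    exact omegaLimit7_subset_pullbackImage hθ0 hθadd (hneg r hr) hsub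
  · exact tendsto_hausSemidist7_of_omegaLimit7_subset (hac τ ω D hD)
      (omegaLimit7_subset_omegaLimit7_of_absorbs hθ0 hθadd hΦcoc (habs D hD))

/-- Properties of the `Ω`-limit set of a closed `𝒟`-pullback absorbing set
`K` of a `𝒟`-pullback asymptotically compact multivalued non-autonomous cocycle `Φ` whose
maps `Φ(t, τ, ω, ·)` are upper semicontinuous: `Ω(K) ∈ 𝒟`, it has compact values, it is
invariant, it attracts every member of `𝒟`, and it is `T`-periodic whenever `Φ` and `K`
are. -/
theorem stmt7 {Ω X : Type*} [MetricSpace X]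
    (θ : ℝ → Ω → Ω) (hθ0 : θ 0 = id)
    (hθadd : ∀ t s : ℝ, θ (t + s) = θ t ∘ θ s)
    (Φ : ℝ → ℝ → Ω → X → Set X)
    -- `Φ` is a multivalued non-autonomous cocycle with nonempty closed values:
    (hΦ0 : ∀ (τ : ℝ) (ω : Ω) (x : X), Φ 0 τ ω x = {x})
    (hΦne : ∀ t : ℝ, 0 ≤ t → ∀ (τ : ℝ) (ω : Ω) (x : X), (Φ t τ ω x).Nonempty)
    (hΦcl : ∀ t : ℝ, 0 ≤ t → ∀ (τ : ℝ) (ω : Ω) (x : X), IsClosed (Φ t τ ω x))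
    (hΦcoc : ∀ t s : ℝ, 0 ≤ t → 0 ≤ s → ∀ (τ : ℝ) (ω : Ω) (x : X),
      Φ (t + s) τ ω x = ⋃ y ∈ Φ s τ ω x, Φ t (τ + s) (θ s ω) y)
    -- `𝒟` is an inclusion-closed collection of families of nonempty subsets of `X`:
    (𝒟 : Set (ℝ → Ω → Set X))
    (h𝒟ne : ∀ D ∈ 𝒟, ∀ (τ : ℝ) (ω : Ω), (D τ ω).Nonempty)
    (h𝒟inc : ∀ D ∈ 𝒟, ∀ D' : ℝ → Ω → Set X,
      (∀ (τ : ℝ) (ω : Ω), D' τ ω ⊆ D τ ω) → (∀ (τ : ℝ) (ω : Ω), (D' τ ω).Nonempty) →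
      D' ∈ 𝒟)
    -- `Φ` is `𝒟`-pullback asymptotically compact:
    (hac : ∀ (τ : ℝ) (ω : Ω), ∀ D ∈ 𝒟, ∀ (t : ℕ → ℝ) (x : ℕ → X),
      Tendsto t atTop atTop →
      (∀ n, x n ∈ imageSet7 Φ (t n) (τ - t n) (θ (-(t n)) ω)
        (D (τ - t n) (θ (-(t n)) ω))) →
      ∃ a : X, ∃ φ : ℕ → ℕ, StrictMono φ ∧ Tendsto (fun k => x (φ k)) atTop (𝓝 a))
    -- `Φ(t, τ, ω, ·)` is upper semicontinuous:
    (husc : ∀ t : ℝ, 0 ≤ t → ∀ (τ : ℝ) (ω : Ω) (x : X), ∀ U : Set X, IsOpen U →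
      Φ t τ ω x ⊆ U → ∃ δ > 0, ∀ x' : X, dist x' x < δ → Φ t τ ω x' ⊆ U)
    -- `K ∈ 𝒟` is a closed `𝒟`-pullback absorbing set of `Φ`:
    (K : ℝ → Ω → Set X) (hK𝒟 : K ∈ 𝒟)
    (hKcl : ∀ (τ : ℝ) (ω : Ω), IsClosed (K τ ω))
    (hKabs : ∀ (τ : ℝ) (ω : Ω), ∀ D ∈ 𝒟, ∃ T > 0, ∀ t : ℝ, T ≤ t →
      imageSet7 Φ t (τ - t) (θ (-t) ω) (D (τ - t) (θ (-t) ω)) ⊆ K τ ω) :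
    -- (i) `Ω(K) ∈ 𝒟` and `Ω(K)(τ, ω)` is compact
    (omegaLimit7 Φ θ K ∈ 𝒟 ∧ ∀ (τ : ℝ) (ω : Ω), IsCompact (omegaLimit7 Φ θ K τ ω)) ∧
    -- (ii) `Ω(K)` is invariant
    (∀ t : ℝ, 0 ≤ t → ∀ (τ : ℝ) (ω : Ω),
      imageSet7 Φ t τ ω (omegaLimit7 Φ θ K τ ω) = omegaLimit7 Φ θ K (τ + t) (θ t ω)) ∧
    -- (iii) `Ω(K)` attracts every member of `𝒟`
    (∀ (τ : ℝ) (ω : Ω), ∀ D ∈ 𝒟,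
      Tendsto (fun t : ℝ => hausSemidist7
          (imageSet7 Φ t (τ - t) (θ (-t) ω) (D (τ - t) (θ (-t) ω)))
          (omegaLimit7 Φ θ K τ ω)) atTop (𝓝 0)) ∧
    -- periodicity
    (∀ T : ℝ, 0 < T →
      (∀ (t τ : ℝ) (ω : Ω), Φ t (τ + T) ω = Φ t τ ω) →
      (∀ (τ : ℝ) (ω : Ω), K (τ + T) ω = K τ ω) →
      ∀ (τ : ℝ) (ω : Ω), omegaLimit7 Φ θ K (τ + T) ω = omegaLimit7 Φ θ K τ ω) :=
  stmt7_general θ hθ0 hθadd Φ hΦne hΦcl hΦcoc 𝒟 h𝒟ne h𝒟inc hac husc K hK𝒟 hKcl hKabs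
end

section
/- Let X be a metric space, Ω a set, and θ : ℝ → (Ω → Ω) a group of transformations. Let Φ be a multivalued non-autonomous cocycle on X over θ, 𝒟 an inclusion-closed collection of families of nonempty subsets of X, and suppose Φ is 𝒟-pullback asymptotically compact, Φ(t, τ, ω, ·) is upper semicontinuous for each t ≥ 0, τ ∈ ℝ, ω ∈ Ω, and K ∈ 𝒟 is a closed 𝒟-pullback absorbing set for Φ. Then for every τ ∈ ℝ and ω ∈ Ω, the Ω-limit set of K admits the representation Ω(K)(τ, ω) = ⋂_{n=1}^∞ cl(⋃_{m=n}^∞ Φ(m, τ − m, θ_{−m}ω, K(τ − m, θ_{−m}ω))), where m ranges over positive integers. -/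
/-! By the cocycle property, the pullback image of `K` over a time `t = n + s` is the image over
time `n` of the pullback image of `K` over time `s`, and the latter lies in `K` once `s` exceeds
the absorption time. So every real time beyond `n + T` contributes only points of the set at the
integer time `n`, and the two intersections of closures coincide. -/

open Filter Topology Set ENNReal

/-- The image of a set under a multivalued map: `Φ(t, τ, ω, S) = ⋃_{x ∈ S} Φ(t, τ, ω, x)`. -/
def imageSet8 {Ω X : Type*} (Φ : ℝ → ℝ → Ω → X → Set X)
    (t τ : ℝ) (ω : Ω) (S : Set X) : Set X :=
  ⋃ x ∈ S, Φ t τ ω x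

/-- The `Ω`-limit set of a family `B`:
`Ω(B)(τ, ω) = ⋂_{r ≥ 0} cl (⋃_{t ≥ r} Φ(t, τ − t, θ_{−t} ω, B(τ − t, θ_{−t} ω)))`. -/
def omegaLimit8 {Ω X : Type*} [MetricSpace X] (Φ : ℝ → ℝ → Ω → X → Set X)
    (θ : ℝ → Ω → Ω) (B : ℝ → Ω → Set X) (τ : ℝ) (ω : Ω) : Set X :=
  ⋂ (r : ℝ) (_ : 0 ≤ r),
    closure (⋃ (t : ℝ) (_ : r ≤ t),
      imageSet8 Φ t (τ - t) (θ (-t) ω) (B (τ - t) (θ (-t) ω)))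

/-- The Hausdorff semidistance `d(A, B) = sup_{a ∈ A} inf_{b ∈ B} d(a, b)` (valued in
`ℝ≥0∞`). -/
noncomputable def hausSemidist8 {X : Type*} [MetricSpace X] (A B : Set X) : ℝ≥0∞ :=
  ⨆ a ∈ A, EMetric.infEdist a B

theorem iInter_closure_iUnion_ge_real_eq_nat {X : Type*} [TopologicalSpace X] (F : ℝ → Set X)
    (hF : ∀ n : ℕ, 1 ≤ n → ∃ r ≥ 0, ∀ t, r ≤ t → F t ⊆ F n) :
    ⋂ (r : ℝ) (_ : 0 ≤ r), closure (⋃ (t : ℝ) (_ : r ≤ t), F t) =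
      ⋂ (n : ℕ) (_ : 1 ≤ n), closure (⋃ (m : ℕ) (_ : n ≤ m), F m) := by
  apply Subset.antisymm
  · refine subset_iInter₂ fun n hn => ?_
    obtain ⟨r, hr, hFr⟩ := hF n hn
    refine (iInter₂_subset r hr).trans (closure_mono (iUnion₂_subset fun t ht => ?_))
    exact (hFr t ht).trans (subset_iUnion₂ (s := fun (m : ℕ) (_ : n ≤ m) => F m) n le_rfl)
  · refine subset_iInter₂ fun r _ => ?_
    have hr : r ≤ (max 1 ⌈r⌉₊ : ℕ) := (Nat.le_ceil r).trans (by exact_mod_cast le_max_right _ _)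
    refine (iInter₂_subset (max 1 ⌈r⌉₊) (le_max_left _ _)).trans
      (closure_mono (iUnion₂_subset fun m hm => ?_))
    exact subset_iUnion₂ (s := fun (t : ℝ) (_ : r ≤ t) => F t) (m : ℝ)
      (hr.trans (by exact_mod_cast hm))

section Cocycle

variable {Ω X : Type*} {Φ : ℝ → ℝ → Ω → X → Set X} {θ : ℝ → Ω → Ω}

theorem imageSet8_mono {t τ : ℝ} {ω : Ω} {S S' : Set X} (h : S ⊆ S') :
    imageSet8 Φ t τ ω S ⊆ imageSet8 Φ t τ ω S' :=
  biUnion_subset_biUnion_left h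

theorem imageSet8_add
    (hΦcoc : ∀ t s : ℝ, 0 ≤ t → 0 ≤ s → ∀ (τ : ℝ) (ω : Ω) (x : X),
      Φ (t + s) τ ω x = ⋃ y ∈ Φ s τ ω x, Φ t (τ + s) (θ s ω) y)
    {t s : ℝ} (ht : 0 ≤ t) (hs : 0 ≤ s) (τ : ℝ) (ω : Ω) (S : Set X) :
    imageSet8 Φ (t + s) τ ω S = imageSet8 Φ t (τ + s) (θ s ω) (imageSet8 Φ s τ ω S) := by
  simp only [imageSet8, hΦcoc t s ht hs, biUnion_iUnion]

theorem imageSet8_pullback_subset_of_absorbs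
    (hθadd : ∀ t s : ℝ, θ (t + s) = θ t ∘ θ s)
    (hΦcoc : ∀ t s : ℝ, 0 ≤ t → 0 ≤ s → ∀ (τ : ℝ) (ω : Ω) (x : X),
      Φ (t + s) τ ω x = ⋃ y ∈ Φ s τ ω x, Φ t (τ + s) (θ s ω) y)
    {D K : ℝ → Ω → Set X} {τ n T : ℝ} {ω : Ω} (hn : 0 ≤ n) (hT : 0 ≤ T)
    (habs : ∀ s : ℝ, T ≤ s →
      imageSet8 Φ s (τ - n - s) (θ (-s) (θ (-n) ω)) (D (τ - n - s) (θ (-s) (θ (-n) ω))) ⊆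
        K (τ - n) (θ (-n) ω))
    {t : ℝ} (ht : n + T ≤ t) :
    imageSet8 Φ t (τ - t) (θ (-t) ω) (D (τ - t) (θ (-t) ω)) ⊆
      imageSet8 Φ n (τ - n) (θ (-n) ω) (K (τ - n) (θ (-n) ω)) := by
  obtain ⟨s, hsT, rfl⟩ : ∃ s, T ≤ s ∧ t = n + s := ⟨t - n, by linarith, by ring⟩
  have hθs : θ s (θ (-(n + s)) ω) = θ (-n) ω := by
    rw [← Function.comp_apply (f := θ s), ← hθadd]; congr 1; ring
  have hθns : θ (-s) (θ (-n) ω) = θ (-(n + s)) ω := by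
    rw [← Function.comp_apply (f := θ (-s)), ← hθadd]; congr 1; ring
  have hτ : τ - (n + s) + s = τ - n := by ring
  have hτ' : τ - n - s = τ - (n + s) := by ring
  rw [imageSet8_add hΦcoc hn (hT.trans hsT), hθs, hτ]
  refine imageSet8_mono ?_
  simpa only [hθns, hτ'] using habs s hsT

end Cocycle

theorem stmt8_general {Ω X : Type*} [MetricSpace X]
    (θ : ℝ → Ω → Ω)
    (hθadd : ∀ t s : ℝ, θ (t + s) = θ t ∘ θ s)
    (Φ : ℝ → ℝ → Ω → X → Set X)
    (hΦcoc : ∀ t s : ℝ, 0 ≤ t → 0 ≤ s → ∀ (τ : ℝ) (ω : Ω) (x : X),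
      Φ (t + s) τ ω x = ⋃ y ∈ Φ s τ ω x, Φ t (τ + s) (θ s ω) y)
    (𝒟 : Set (ℝ → Ω → Set X))
    (K : ℝ → Ω → Set X) (hK𝒟 : K ∈ 𝒟)
    (hKabs : ∀ (τ : ℝ) (ω : Ω), ∀ D ∈ 𝒟, ∃ T > 0, ∀ t : ℝ, T ≤ t →
      imageSet8 Φ t (τ - t) (θ (-t) ω) (D (τ - t) (θ (-t) ω)) ⊆ K τ ω) :
    ∀ (τ : ℝ) (ω : Ω),
      omegaLimit8 Φ θ K τ ω =
        ⋂ (n : ℕ) (_ : 1 ≤ n),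
          closure (⋃ (m : ℕ) (_ : n ≤ m),
            imageSet8 Φ (m : ℝ) (τ - (m : ℝ)) (θ (-(m : ℝ)) ω)
              (K (τ - (m : ℝ)) (θ (-(m : ℝ)) ω))) := by
  intro τ ω
  refine iInter_closure_iUnion_ge_real_eq_nat _ fun n _ => ?_
  obtain ⟨T, hT, habs⟩ := hKabs (τ - n) (θ (-(n : ℝ)) ω) K hK𝒟
  exact ⟨n + T, by positivity, fun t ht =>
    imageSet8_pullback_subset_of_absorbs hθadd hΦcoc (Nat.cast_nonneg n) hT.le habs ht⟩

/-- Under the hypotheses of Statement 7, for every `τ` and `ω` the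
`Ω`-limit set of the absorbing set `K` can be represented using integer times:
`Ω(K)(τ, ω) = ⋂_{n ≥ 1} cl (⋃_{m ≥ n} Φ(m, τ − m, θ_{−m} ω, K(τ − m, θ_{−m} ω)))`. -/
theorem stmt8 {Ω X : Type*} [MetricSpace X]
    (θ : ℝ → Ω → Ω) (hθ0 : θ 0 = id)
    (hθadd : ∀ t s : ℝ, θ (t + s) = θ t ∘ θ s)
    (Φ : ℝ → ℝ → Ω → X → Set X)
    (hΦ0 : ∀ (τ : ℝ) (ω : Ω) (x : X), Φ 0 τ ω x = {x})
    (hΦne : ∀ t : ℝ, 0 ≤ t → ∀ (τ : ℝ) (ω : Ω) (x : X), (Φ t τ ω x).Nonempty)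
    (hΦcl : ∀ t : ℝ, 0 ≤ t → ∀ (τ : ℝ) (ω : Ω) (x : X), IsClosed (Φ t τ ω x))
    (hΦcoc : ∀ t s : ℝ, 0 ≤ t → 0 ≤ s → ∀ (τ : ℝ) (ω : Ω) (x : X),
      Φ (t + s) τ ω x = ⋃ y ∈ Φ s τ ω x, Φ t (τ + s) (θ s ω) y)
    (𝒟 : Set (ℝ → Ω → Set X))
    (h𝒟ne : ∀ D ∈ 𝒟, ∀ (τ : ℝ) (ω : Ω), (D τ ω).Nonempty)
    (h𝒟inc : ∀ D ∈ 𝒟, ∀ D' : ℝ → Ω → Set X,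
      (∀ (τ : ℝ) (ω : Ω), D' τ ω ⊆ D τ ω) → (∀ (τ : ℝ) (ω : Ω), (D' τ ω).Nonempty) →
      D' ∈ 𝒟)
    (hac : ∀ (τ : ℝ) (ω : Ω), ∀ D ∈ 𝒟, ∀ (t : ℕ → ℝ) (x : ℕ → X),
      Tendsto t atTop atTop →
      (∀ n, x n ∈ imageSet8 Φ (t n) (τ - t n) (θ (-(t n)) ω)
        (D (τ - t n) (θ (-(t n)) ω))) →
      ∃ a : X, ∃ φ : ℕ → ℕ, StrictMono φ ∧ Tendsto (fun k => x (φ k)) atTop (𝓝 a))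
    (husc : ∀ t : ℝ, 0 ≤ t → ∀ (τ : ℝ) (ω : Ω) (x : X), ∀ U : Set X, IsOpen U →
      Φ t τ ω x ⊆ U → ∃ δ > 0, ∀ x' : X, dist x' x < δ → Φ t τ ω x' ⊆ U)
    (K : ℝ → Ω → Set X) (hK𝒟 : K ∈ 𝒟)
    (hKcl : ∀ (τ : ℝ) (ω : Ω), IsClosed (K τ ω))
    (hKabs : ∀ (τ : ℝ) (ω : Ω), ∀ D ∈ 𝒟, ∃ T > 0, ∀ t : ℝ, T ≤ t →
      imageSet8 Φ t (τ - t) (θ (-t) ω) (D (τ - t) (θ (-t) ω)) ⊆ K τ ω) :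
    ∀ (τ : ℝ) (ω : Ω),
      omegaLimit8 Φ θ K τ ω =
        ⋂ (n : ℕ) (_ : 1 ≤ n),
          closure (⋃ (m : ℕ) (_ : n ≤ m),
            imageSet8 Φ (m : ℝ) (τ - (m : ℝ)) (θ (-(m : ℝ)) ω)
              (K (τ - (m : ℝ)) (θ (-(m : ℝ)) ω))) :=
  stmt8_general θ hθadd Φ hΦcoc 𝒟 K hK𝒟 hKabs
end

section
/- Let α > 0 and m ∈ ℕ, m ≥ 1. Suppose ω_n (n ∈ ℕ) and ω belong to Ω_m and ω_n → ω uniformly on every compact subset of ℝ. Then for every compact interval [a, b] ⊆ ℝ, y(θ_t ω_n) → y(θ_t ω) uniformly for t ∈ [a, b] as n → ∞. In particular, if t_n → t in ℝ, then y(θ_{t_n} ω_n) → y(θ_t ω). -/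
open Filter Topology MeasureTheory

/-- The Wiener shift: `(θ_t ω)(s) = ω(s + t) − ω(t)`. -/
def shiftOU (t : ℝ) (ω : ℝ → ℝ) : ℝ → ℝ := fun s => ω (s + t) - ω t

/-- The random variable `y(ω) = −α ∫_{−∞}^0 e^{ατ} ω(τ) dτ`. -/
noncomputable def yOU (α : ℝ) (ω : ℝ → ℝ) : ℝ :=
  -α * ∫ τ in Set.Iic (0 : ℝ), Real.exp (α * τ) * ω τ

/-- Membership in `Ω_m`: for all `|t| ≥ m`, `|ω(t)| ≤ |t|` and
`|∫_0^t |y(θ_r ω)|² dr| ≤ |t|/α`. -/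
noncomputable def memOmegaM (α : ℝ) (m : ℕ) (ω : ℝ → ℝ) : Prop :=
  ∀ t : ℝ, (m : ℝ) ≤ |t| →
    |ω t| ≤ |t| ∧ |∫ r in (0 : ℝ)..t, (yOU α (shiftOU r ω)) ^ 2| ≤ |t| / α

/-! The growth bound `|ωₙ(s)| ≤ |s|` for `|s| ≥ m`, together with uniform convergence on
`[-m, m]`, gives `|ωₙ(s)| ≤ |s| + C` with `C` independent of `n`. Hence the integrands
`e^{ατ} (ωₙ(τ + t) - ωₙ(t))` are dominated by a multiple of `e^{ατ/2}` for `t` near `t₀`, and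
dominated convergence along `atTop ×ˢ 𝓝 t₀` shows that `y(θ_t ωₙ) → y(θ_{t₀} ω)` as `n → ∞` and
`t → t₀` jointly. Such continuous convergence to a continuous limit is locally uniform. -/

open Real Set

lemma exp_mul_mul_abs_add_le {α τ D : ℝ} (hα : 0 < α) (hτ : τ ≤ 0) (hD : 0 ≤ D) :
    exp (α * τ) * (|τ| + D) ≤ (2 / α + D) * exp (α / 2 * τ) := by
  set E := exp (α / 2 * τ)
  have hE : 0 < E := exp_pos _
  have hE1 : E ≤ 1 := exp_le_one_iff.2 (by nlinarith)
  have hsq : exp (α * τ) = E * E := by rw [← exp_add]; ring_nf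
  -- `1 + x ≤ eˣ` at `x = -ατ/2` gives `|τ| E ≤ 2/α`.
  have hlin : -(α / 2 * τ) + 1 ≤ exp (-(α / 2 * τ)) := add_one_le_exp _
  have hinv : E * exp (-(α / 2 * τ)) = 1 := by rw [← exp_add]; simp
  have hτE : |τ| * E ≤ 2 / α := by
    rw [abs_of_nonpos hτ, le_div_iff₀ hα]
    nlinarith
  calc exp (α * τ) * (|τ| + D) = (|τ| * E + D * E) * E := by rw [hsq]; ring
    _ ≤ (2 / α + D * 1) * E := by gcongr
    _ = (2 / α + D) * E := by ring

lemma exists_eventually_abs_le_abs_add {ι : Type*} {l : Filter ι} {ω : ι → ℝ → ℝ} {ω₀ : ℝ → ℝ}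
    {R : ℝ} (hconv : TendstoUniformlyOn ω ω₀ l (Icc (-R) R)) (hω₀ : ContinuousOn ω₀ (Icc (-R) R))
    (hgrowth : ∀ i s, R ≤ |s| → |ω i s| ≤ |s|) :
    ∃ C, 0 ≤ C ∧ ∀ᶠ i in l, ∀ s, |ω i s| ≤ |s| + C := by
  obtain ⟨M, hM⟩ := isCompact_Icc.exists_bound_of_continuousOn hω₀
  refine ⟨max M 0 + 1, by positivity, ?_⟩
  filter_upwards [Metric.tendstoUniformlyOn_iff.1 hconv 1 one_pos] with i hi s
  by_cases hs : R ≤ |s|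
  · linarith [hgrowth i s hs, le_max_right M 0]
  · have hsR : s ∈ Icc (-R) R := abs_le.1 (not_le.1 hs).le
    have hclose : |ω i s - ω₀ s| < 1 := by rw [← Real.dist_eq, dist_comm]; exact hi s hsR
    have hbound : |ω₀ s| ≤ M := hM s hsR
    linarith [abs_sub_abs_le_abs_sub (ω i s) (ω₀ s), le_max_left M 0, abs_nonneg s]

theorem tendsto_yOU_shiftOU {ι : Type*} {l : Filter ι} [l.IsCountablyGenerated] {α : ℝ}
    (hα : 0 < α) {ω : ι → ℝ → ℝ} {ω₀ : ℝ → ℝ} {t : ι → ℝ} {t₀ : ℝ}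
    (hω : ∀ᶠ i in l, Continuous (ω i)) {C : ℝ} (hC : 0 ≤ C)
    (hbound : ∀ᶠ i in l, ∀ s, |ω i s| ≤ |s| + C) (ht : Tendsto t l (𝓝 t₀))
    (hlim : ∀ s, Tendsto (fun i => ω i (s + t i)) l (𝓝 (ω₀ (s + t₀)))) :
    Tendsto (fun i => yOU α (shiftOU (t i) (ω i))) l (𝓝 (yOU α (shiftOU t₀ ω₀))) := by
  set D := 2 * (|t₀| + 1) + 2 * C
  refine (tendsto_integral_filter_of_dominated_convergence
    (fun τ => (2 / α + D) * exp (α / 2 * τ)) ?_ ?_ ?_ ?_).const_mul (-α)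
  · filter_upwards [hω] with i hi
    unfold shiftOU
    fun_prop
  · have hti : ∀ᶠ i in l, |t i| < |t₀| + 1 :=
      ((continuous_abs.tendsto t₀).comp ht).eventually_lt_const (lt_add_one _)
    filter_upwards [hbound, hti] with i hi hti
    filter_upwards [ae_restrict_mem measurableSet_Iic] with τ hτ
    have hshift : |shiftOU (t i) (ω i) τ| ≤ |τ| + D := by
      unfold shiftOU
      linarith [abs_add_le τ (t i), abs_sub (ω i (τ + t i)) (ω i (t i)), hi (τ + t i), hi (t i)]
    rw [norm_mul, Real.norm_of_nonneg (exp_pos _).le, Real.norm_eq_abs]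
    exact (mul_le_mul_of_nonneg_left hshift (exp_pos _).le).trans
      (exp_mul_mul_abs_add_le hα hτ (by positivity))
  · exact (integrableOn_exp_mul_Iic (half_pos hα) 0).const_mul _
  · refine ae_of_all _ fun τ => (((hlim τ).sub ?_).const_mul (exp (α * τ)))
    simpa using hlim 0

theorem tendstoLocallyUniformly_of_tendsto_prod {ι α β : Type*} [TopologicalSpace α]
    [UniformSpace β] {F : ι → α → β} {f : α → β} {p : Filter ι} (hf : Continuous f)
    (h : ∀ x, Tendsto (fun q : ι × α => F q.1 q.2) (p ×ˢ 𝓝 x) (𝓝 (f x))) :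
    TendstoLocallyUniformly F f p :=
  tendstoLocallyUniformly_iff_forall_tendsto.2 fun x =>
    (((hf.tendsto x).comp tendsto_snd).prodMk_nhds (h x)).mono_right (nhds_le_uniformity _)

theorem stmt12_general (α : ℝ) (hα : 0 < α) (m : ℕ)
    (ω : ℕ → ℝ → ℝ) (ω₀ : ℝ → ℝ)
    (hcont : ∀ n, Continuous (ω n)) (hcont₀ : Continuous ω₀)
    (hmem : ∀ n, memOmegaM α m (ω n))
    (hconv : ∀ K : Set ℝ, IsCompact K → TendstoUniformlyOn (fun n => ω n) ω₀ atTop K) :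
    (∀ a b : ℝ, TendstoUniformlyOn (fun n t => yOU α (shiftOU t (ω n)))
        (fun t => yOU α (shiftOU t ω₀)) atTop (Set.Icc a b)) ∧
    (∀ (t : ℕ → ℝ) (t₀ : ℝ), Tendsto t atTop (𝓝 t₀) →
      Tendsto (fun n => yOU α (shiftOU (t n) (ω n))) atTop
        (𝓝 (yOU α (shiftOU t₀ ω₀)))) := by
  have hloc : TendstoLocallyUniformly ω ω₀ atTop :=
    tendstoLocallyUniformly_iff_forall_isCompact.2 hconv
  obtain ⟨C, hC, hbound⟩ := exists_eventually_abs_le_abs_add (hconv _ isCompact_Icc)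
    hcont₀.continuousOn fun n s hs => (hmem n s hs).1
  have hbound₀ : ∀ s, |ω₀ s| ≤ |s| + C := fun s =>
    le_of_tendsto ((continuous_abs.tendsto _).comp
      (hloc.tendsto_comp hcont₀.continuousAt tendsto_const_nhds)) (hbound.mono fun _ h => h s)
  have hy₀ : Continuous fun t => yOU α (shiftOU t ω₀) :=
    continuous_iff_continuousAt.2 fun _ => tendsto_yOU_shiftOU hα (.of_forall fun _ => hcont₀) hC
      (.of_forall fun _ => hbound₀) tendsto_id
      fun s => (hcont₀.tendsto _).comp (tendsto_id.const_add s)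
  have hy (t₀ : ℝ) : Tendsto (fun p : ℕ × ℝ => yOU α (shiftOU p.2 (ω p.1))) (atTop ×ˢ 𝓝 t₀)
      (𝓝 (yOU α (shiftOU t₀ ω₀))) := by
    have hloc' : TendstoLocallyUniformly (fun p : ℕ × ℝ => ω p.1) ω₀ (atTop ×ˢ 𝓝 t₀) :=
      fun u hu x => (hloc u hu x).imp fun _ h => ⟨h.1, tendsto_fst.eventually h.2⟩
    exact tendsto_yOU_shiftOU hα (tendsto_fst.eventually (.of_forall hcont)) hC
      (tendsto_fst.eventually hbound) tendsto_snd
      fun s => hloc'.tendsto_comp hcont₀.continuousAt (tendsto_snd.const_add s)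
  have hunif := tendstoLocallyUniformly_of_tendsto_prod
    (F := fun n t => yOU α (shiftOU t (ω n))) hy₀ hy
  exact ⟨fun a b => (tendstoLocallyUniformlyOn_iff_tendstoUniformlyOn_of_compact isCompact_Icc).1
      hunif.tendstoLocallyUniformlyOn,
    fun t t₀ ht => (hy t₀).comp (tendsto_id.prodMk ht)⟩

/-- If `ωₙ → ω` uniformly on compact sets with `ωₙ, ω ∈ Ω_m`, then
`y(θ_t ωₙ) → y(θ_t ω)` uniformly for `t` in any compact interval; in particular, if also
`tₙ → t`, then `y(θ_{tₙ} ωₙ) → y(θ_t ω)`. -/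
theorem stmt12 (α : ℝ) (hα : 0 < α) (m : ℕ) (hm : 1 ≤ m)
    (ω : ℕ → ℝ → ℝ) (ω₀ : ℝ → ℝ)
    (hcont : ∀ n, Continuous (ω n)) (hcont₀ : Continuous ω₀)
    (hzero : ∀ n, ω n 0 = 0) (hzero₀ : ω₀ 0 = 0)
    (hmem : ∀ n, memOmegaM α m (ω n)) (hmem₀ : memOmegaM α m ω₀)
    (hconv : ∀ K : Set ℝ, IsCompact K → TendstoUniformlyOn (fun n => ω n) ω₀ atTop K) :
    (∀ a b : ℝ, TendstoUniformlyOn (fun n t => yOU α (shiftOU t (ω n)))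
        (fun t => yOU α (shiftOU t ω₀)) atTop (Set.Icc a b)) ∧
    (∀ (t : ℕ → ℝ) (t₀ : ℝ), Tendsto t atTop (𝓝 t₀) →
      Tendsto (fun n => yOU α (shiftOU (t n) (ω n))) atTop
        (𝓝 (yOU α (shiftOU t₀ ω₀)))) :=
  stmt12_general α hα m ω ω₀ hcont hcont₀ hmem hconv
end
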